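/- Suppose d_1,…,d_n ∈ {0,1} and let p̂ be the isotonic least-squares fit of d. Then 0 ≤ p̂_i ≤ 1 for all i, and p̂ maximizes the binomial likelihood under the monotonicity constraint: for every vector q with 0 ≤ q_1 ≤ q_2 ≤ … ≤ q_n ≤ 1, ∏_{i=1}^n q_i^{d_i}(1 − q_i)^{1−d_i} ≤ ∏_{i=1}^n p̂_i^{d_i}(1 − p̂_i)^{1−d_i} (with the convention 0^0 = 1). Hence maximizing the constrained binomial likelihood is equivalent to minimizing ∑_{i=1}^n (d_i − p_i)² under the same monotonicity constraint. -/

import Mathlib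

open Finset

/-- `p` is the isotonic least-squares fit of `d`. -/
def IsIsoFit {n : ℕ} (d p : Fin n → ℝ) : Prop :=
  Monotone p ∧ ∀ q : Fin n → ℝ, Monotone q →
    ∑ i, (d i - p i) ^ 2 ≤ ∑ i, (d i - q i) ^ 2

/-!
Perturbing the isotonic fit `p` to `p + t • m` shows `∑ (dᵢ - pᵢ) mᵢ ≤ 0` for monotone `m`;
perturbing it to `p + t • (g ∘ p)`, which stays monotone for small `|t|` because ties of `p`
move together, shows `∑ (dᵢ - pᵢ) g(pᵢ) = 0` for every `g`. Taking for `g` the indicator of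
`{x ≤ 0}` or `{1 ≤ x}` gives `0 ≤ p ≤ 1`, with `pᵢ ∈ {0, 1}` only where `pᵢ = dᵢ`.

For `q ∈ (0,1)ⁿ` the binomial log-likelihood satisfies
`ℓ(q) - ℓ(p) = -KL(p ‖ q) + ∑ (dᵢ - pᵢ) (logit qᵢ - logit pᵢ)`, and the two conditions with
`m = logit ∘ q` and `g = logit` make the sum nonpositive. Boundary points `q` follow by
continuity of the likelihood along `(1 - ε) q + ε / 2`.
-/

open Filter Topology Real

theorem Monotone.eventually_monotone_add_mul_comp {ι : Type*} [Preorder ι] [Finite ι]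
    {p : ι → ℝ} (hp : Monotone p) (g : ℝ → ℝ) :
    ∀ᶠ t in 𝓝 0, Monotone fun i => p i + t * g (p i) := by
  have hpair : ∀ i j, ∀ᶠ t in 𝓝 (0 : ℝ), i ≤ j → p i + t * g (p i) ≤ p j + t * g (p j) := by
    intro i j
    by_cases hij : i ≤ j
    · rcases (hp hij).lt_or_eq with hlt | heq
      · have hcont : Continuous fun t : ℝ => p i + t * g (p i) := by fun_prop
        have hcont' : Continuous fun t : ℝ => p j + t * g (p j) := by fun_prop
        filter_upwards [hcont.continuousAt.eventually_lt hcont'.continuousAt (by simpa using hlt)]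
          with t ht _ using ht.le
      · exact Eventually.of_forall fun t _ => by rw [heq]
    · exact Eventually.of_forall fun t h => absurd h hij
  filter_upwards [eventually_all.2 fun i => eventually_all.2 (hpair i)] with t ht i j hij
  exact ht i j hij

namespace IsIsoFit

variable {n : ℕ} {d p : Fin n → ℝ}

theorem sum_mul_nonpos_of_eventually_monotone (hp : IsIsoFit d p) {m : Fin n → ℝ}
    (hm : ∀ᶠ t in 𝓝[>] 0, Monotone fun i => p i + t * m i) :
    ∑ i, (d i - p i) * m i ≤ 0 := by
  set S := ∑ i, (d i - p i) * m i
  set N := ∑ i, m i ^ 2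
  have hexpand : ∀ t : ℝ, ∑ i, (d i - (p i + t * m i)) ^ 2
      = ∑ i, (d i - p i) ^ 2 - 2 * t * S + t ^ 2 * N := by
    intro t
    have h : ∀ i, (d i - (p i + t * m i)) ^ 2
        = (d i - p i) ^ 2 - 2 * t * ((d i - p i) * m i) + t ^ 2 * m i ^ 2 := fun i => by ring
    simp only [h, sum_add_distrib, sum_sub_distrib, ← mul_sum, S, N]
  have hbound : ∀ᶠ t in 𝓝[>] 0, 2 * S ≤ t * N := by
    filter_upwards [hm, self_mem_nhdsWithin] with t ht (htpos : 0 < t)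
    have := hp.2 _ ht
    rw [hexpand] at this
    nlinarith
  have hlim : Tendsto (fun t : ℝ => t * N) (𝓝[>] 0) (𝓝 0) := by
    simpa using ((continuous_mul_const N).tendsto 0).mono_left nhdsWithin_le_nhds
  linarith [ge_of_tendsto hlim hbound]

theorem sum_mul_nonpos_of_monotone (hp : IsIsoFit d p) {m : Fin n → ℝ} (hm : Monotone m) :
    ∑ i, (d i - p i) * m i ≤ 0 := by
  refine hp.sum_mul_nonpos_of_eventually_monotone (eventually_nhdsWithin_of_forall ?_)
  intro t (ht : 0 < t) i j hij
  have := hp.1 hij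
  have := mul_le_mul_of_nonneg_left (hm hij) ht.le
  linarith

theorem sum_mul_comp_eq_zero (hp : IsIsoFit d p) (g : ℝ → ℝ) :
    ∑ i, (d i - p i) * g (p i) = 0 := by
  have hmono := hp.1.eventually_monotone_add_mul_comp g
  have hneg : Tendsto (fun t : ℝ => -t) (𝓝 0) (𝓝 0) := by
    simpa using (continuous_neg.tendsto (0 : ℝ))
  have hle := hp.sum_mul_nonpos_of_eventually_monotone (nhdsWithin_le_nhds hmono)
  have hge := hp.sum_mul_nonpos_of_eventually_monotone (m := fun i => -g (p i))
    (nhdsWithin_le_nhds <| (hneg.eventually hmono).mono fun t ht => by simpa using ht)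
  simp only [mul_neg, sum_neg_distrib, neg_nonpos] at hge
  exact le_antisymm hle hge

theorem sum_filter_sub_eq_zero (hp : IsIsoFit d p) (P : ℝ → Prop) [DecidablePred P] :
    ∑ i ∈ univ.filter (fun i => P (p i)), (d i - p i) = 0 := by
  simpa only [sum_filter, mul_ite, mul_one, mul_zero] using
    hp.sum_mul_comp_eq_zero fun x => if P x then 1 else 0

theorem eq_of_le_of_forall_le (hp : IsIsoFit d p) {c : ℝ} (hd : ∀ j, c ≤ d j) {i : Fin n}
    (hi : p i ≤ c) : p i = d i := by
  have hnonneg : ∀ j ∈ univ.filter (fun j => p j ≤ c), 0 ≤ d j - p j := fun j hj => by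
    linarith [hd j, (mem_filter.1 hj).2]
  have := (sum_eq_zero_iff_of_nonneg hnonneg).1 (hp.sum_filter_sub_eq_zero (· ≤ c)) i
    (by simpa using hi)
  linarith

theorem eq_of_ge_of_forall_ge (hp : IsIsoFit d p) {c : ℝ} (hd : ∀ j, d j ≤ c) {i : Fin n}
    (hi : c ≤ p i) : p i = d i := by
  have hnonpos : ∀ j ∈ univ.filter (fun j => c ≤ p j), d j - p j ≤ 0 := fun j hj => by
    linarith [hd j, (mem_filter.1 hj).2]
  have := (sum_eq_zero_iff_of_nonpos hnonpos).1 (hp.sum_filter_sub_eq_zero (c ≤ ·)) i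
    (by simpa using hi)
  linarith

theorem mem_Ioo_or_eq (hp : IsIsoFit d p) (hd : ∀ j, d j ∈ Set.Icc 0 1) (i : Fin n) :
    p i ∈ Set.Ioo 0 1 ∨ p i = d i := by
  by_cases h0 : p i ≤ 0
  · exact Or.inr (hp.eq_of_le_of_forall_le (fun j => (hd j).1) h0)
  by_cases h1 : 1 ≤ p i
  · exact Or.inr (hp.eq_of_ge_of_forall_ge (fun j => (hd j).2) h1)
  exact Or.inl ⟨not_le.1 h0, not_le.1 h1⟩

theorem mem_Icc (hp : IsIsoFit d p) (hd : ∀ j, d j ∈ Set.Icc 0 1) (i : Fin n) :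
    p i ∈ Set.Icc 0 1 :=
  (hp.mem_Ioo_or_eq hd i).elim (fun h => Set.Ioo_subset_Icc_self h) (· ▸ hd i)

end IsIsoFit

noncomputable def logit (x : ℝ) : ℝ := log x - log (1 - x)

theorem logit_le_logit {x y : ℝ} (hx : 0 < x) (hxy : x ≤ y) (hy : y < 1) :
    logit x ≤ logit y := by
  have := log_le_log hx hxy
  have := log_le_log (by linarith) (by linarith : 1 - y ≤ 1 - x)
  unfold logit
  linarith

def bernoulliLik (d x : ℝ) : ℝ := d * x + (1 - d) * (1 - x)

section Bernoulli

variable {d : ℝ}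

theorem rpow_mul_one_sub_rpow_eq_bernoulliLik (hd : d = 0 ∨ d = 1) (x : ℝ) :
    x ^ d * (1 - x) ^ (1 - d) = bernoulliLik d x := by
  rcases hd with rfl | rfl <;> simp [bernoulliLik]

theorem log_bernoulliLik (hd : d = 0 ∨ d = 1) (x : ℝ) :
    log (bernoulliLik d x) = d * log x + (1 - d) * log (1 - x) := by
  rcases hd with rfl | rfl <;> simp [bernoulliLik]

theorem bernoulliLik_pos (hd : d = 0 ∨ d = 1) {x : ℝ} (hx : x ∈ Set.Ioo 0 1 ∨ x = d) :
    0 < bernoulliLik d x := by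
  rcases hx with ⟨hx0, hx1⟩ | rfl <;> rcases hd with rfl | rfl <;>
    simp only [bernoulliLik, zero_mul, mul_zero, one_mul, mul_one, sub_zero, sub_self, zero_add,
      add_zero, sub_pos, zero_lt_one] <;> linarith

theorem mul_sub_log_le {a q : ℝ} (ha : 0 ≤ a) (hq : 0 < q) : a * (log q - log a) ≤ q - a := by
  rcases ha.eq_or_lt with rfl | ha
  · simpa using hq.le
  have := log_le_sub_one_of_pos (div_pos hq ha)
  rw [log_div hq.ne' ha.ne'] at this
  calc a * (log q - log a) ≤ a * (q / a - 1) := mul_le_mul_of_nonneg_left this ha.le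
    _ = q - a := by field_simp

theorem log_bernoulliLik_sub_le (hd : d = 0 ∨ d = 1) {a q : ℝ} (ha : a ∈ Set.Icc 0 1)
    (hq : q ∈ Set.Ioo 0 1) :
    log (bernoulliLik d q) - log (bernoulliLik d a) ≤ (d - a) * (logit q - logit a) := by
  have h₁ := mul_sub_log_le ha.1 hq.1
  have h₂ := mul_sub_log_le (sub_nonneg.2 ha.2) (sub_pos.2 hq.2)
  rw [log_bernoulliLik hd, log_bernoulliLik hd]
  unfold logit
  linear_combination h₁ + h₂

end Bernoulli

namespace IsIsoFit

variable {n : ℕ} {d p q : Fin n → ℝ}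

theorem prod_bernoulliLik_le_of_mem_Ioo (hd : ∀ i, d i = 0 ∨ d i = 1) (hp : IsIsoFit d p)
    (hq : Monotone q) (hq01 : ∀ i, q i ∈ Set.Ioo 0 1) :
    ∏ i, bernoulliLik (d i) (q i) ≤ ∏ i, bernoulliLik (d i) (p i) := by
  have hd01 : ∀ i, d i ∈ Set.Icc 0 1 := fun i => by rcases hd i with h | h <;> simp [h]
  have hqpos : ∀ i, 0 < bernoulliLik (d i) (q i) := fun i =>
    bernoulliLik_pos (hd i) (.inl (hq01 i))
  have hppos : ∀ i, 0 < bernoulliLik (d i) (p i) := fun i =>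
    bernoulliLik_pos (hd i) (hp.mem_Ioo_or_eq hd01 i)
  have hlogit : Monotone fun i => logit (q i) := fun i j hij =>
    logit_le_logit (hq01 i).1 (hq hij) (hq01 j).2
  rw [← log_le_log_iff (prod_pos fun i _ => hqpos i) (prod_pos fun i _ => hppos i),
    log_prod fun i _ => (hqpos i).ne', log_prod fun i _ => (hppos i).ne']
  calc ∑ i, log (bernoulliLik (d i) (q i))
      ≤ ∑ i, (log (bernoulliLik (d i) (p i)) + (d i - p i) * (logit (q i) - logit (p i))) :=
        sum_le_sum fun i _ => by
          linarith [log_bernoulliLik_sub_le (hd i) (hp.mem_Icc hd01 i) (hq01 i)]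
    _ = ∑ i, log (bernoulliLik (d i) (p i)) + ∑ i, (d i - p i) * logit (q i)
          - ∑ i, (d i - p i) * logit (p i) := by
        simp only [mul_sub, sum_add_distrib, sum_sub_distrib]; ring
    _ ≤ ∑ i, log (bernoulliLik (d i) (p i)) := by
        linarith [hp.sum_mul_nonpos_of_monotone hlogit, hp.sum_mul_comp_eq_zero logit]

theorem prod_bernoulliLik_le (hd : ∀ i, d i = 0 ∨ d i = 1) (hp : IsIsoFit d p)
    (hq : Monotone q) (hq01 : ∀ i, q i ∈ Set.Icc 0 1) :
    ∏ i, bernoulliLik (d i) (q i) ≤ ∏ i, bernoulliLik (d i) (p i) := by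
  set qε : ℝ → Fin n → ℝ := fun ε i => (1 - ε) * q i + ε / 2
  have hlim : Tendsto (fun ε => ∏ i, bernoulliLik (d i) (qε ε i)) (𝓝[>] 0)
      (𝓝 (∏ i, bernoulliLik (d i) (q i))) := by
    have hcont : Continuous fun ε => ∏ i, bernoulliLik (d i) (qε ε i) := by
      unfold bernoulliLik; fun_prop
    simpa [qε] using (hcont.tendsto 0).mono_left nhdsWithin_le_nhds
  refine le_of_tendsto hlim ?_
  filter_upwards [Ioo_mem_nhdsGT (zero_lt_one' ℝ)] with ε ⟨hε0, hε1⟩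
  refine hp.prod_bernoulliLik_le_of_mem_Ioo hd (fun i j hij => ?_) fun i => ⟨?_, ?_⟩
  · have := mul_le_mul_of_nonneg_left (hq hij) (sub_nonneg.2 hε1.le)
    simp only [qε]; linarith
  · have := mul_nonneg (sub_nonneg.2 hε1.le) (hq01 i).1
    simp only [qε]; linarith
  · have := mul_le_mul_of_nonneg_left (hq01 i).2 (sub_nonneg.2 hε1.le)
    simp only [qε]; linarith

end IsIsoFit

/-- For binary data `d ∈ {0,1}ⁿ`, the isotonic least-squares fit `p̂` takes values in
`[0,1]` and maximizes the binomial likelihood `∏ qᵢ^{dᵢ} (1-qᵢ)^{1-dᵢ}` over all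
nondecreasing `q` with values in `[0,1]` (real powers, with the rpow convention
`0 ^ 0 = 1`).  Hence maximizing the constrained binomial likelihood is equivalent to
constrained least squares. -/
theorem isotonic_fit_maximizes_binomial_likelihood {n : ℕ} (d p : Fin n → ℝ)
    (hd : ∀ i, d i = 0 ∨ d i = 1) (hp : IsIsoFit d p) :
    (∀ i, 0 ≤ p i ∧ p i ≤ 1) ∧
    ∀ q : Fin n → ℝ, Monotone q → (∀ i, 0 ≤ q i ∧ q i ≤ 1) →
      ∏ i, q i ^ d i * (1 - q i) ^ (1 - d i) ≤
        ∏ i, p i ^ d i * (1 - p i) ^ (1 - d i) := by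
  have hd01 : ∀ i, d i ∈ Set.Icc 0 1 := fun i => by rcases hd i with h | h <;> simp [h]
  refine ⟨hp.mem_Icc hd01, fun q hq hq01 => ?_⟩
  simp only [fun i => rpow_mul_one_sub_rpow_eq_bernoulliLik (hd i)]
  exact hp.prod_bernoulliLik_le hd hq hq01
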